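/- arXiv:2012.14310 — 7 statements merged into one kernel-verified Lean document; each statement's English description precedes it below -/
import Mathlib

section
/- Let (γ_n)_{n≥1} be a non-increasing positive sequence with limsup_n (γ_n − γ_{n+1})/γ_{n+1}^2 = ϖ < ∞, and let ρ > ϖ. Define Γ_n = γ_1 + ⋯ + γ_n and u_n = Σ_{k=1}^n γ_k^2 e^{−ρ(Γ_n − Γ_k)}. Then limsup_n u_n/γ_n < ∞. -/
/-!
Write `u n = ∑_{k ≤ n} γ_k² e^{-ρ(Γ_n - Γ_k)}`, so that `u (n+1) = e^{-ρ γ_{n+1}} u n + γ_{n+1}²`.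
Pick `ϖ < ρ' < ρ`; eventually `γ_n ≤ γ_{n+1}(1 + ρ' γ_{n+1}) ≤ γ_{n+1} e^{ρ' γ_{n+1}}`. Hence the
bound `u n ≤ K γ_n` propagates from `n` to `n + 1` as soon as `x ≤ K (1 - e^{-(ρ - ρ')x})` for
every `x` in the (bounded) range of `γ`, which holds for `K = e^{(ρ-ρ')M}/(ρ-ρ')`.
-/

open Filter Real

noncomputable def discountedSum (γ f : ℕ → ℝ) (ρ : ℝ) (n : ℕ) : ℝ :=
  ∑ k ∈ Finset.Icc 1 n,
    f k * exp (-ρ * ((∑ j ∈ Finset.Icc 1 n, γ j) - ∑ j ∈ Finset.Icc 1 k, γ j))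

theorem discountedSum_succ (γ f : ℕ → ℝ) (ρ : ℝ) (n : ℕ) :
    discountedSum γ f ρ (n + 1) = exp (-ρ * γ (n + 1)) * discountedSum γ f ρ n + f (n + 1) := by
  simp only [discountedSum, Finset.sum_Icc_succ_top (Nat.le_add_left 1 n), sub_self, mul_zero,
    exp_zero, mul_one, Finset.mul_sum]
  congr 1
  refine Finset.sum_congr rfl fun k _ => ?_
  rw [mul_left_comm, ← exp_add]
  ring_nf

theorem le_exp_mul_div_mul_one_sub_exp_neg {c x M : ℝ} (hc : 0 < c) (hx : 0 ≤ x)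
    (hxM : x ≤ M) : x ≤ exp (c * M) / c * (1 - exp (-(c * x))) := by
  have hlin : c * x + 1 ≤ exp (c * x) := add_one_le_exp _
  have hmono : exp (c * x) ≤ exp (c * M) := exp_le_exp.2 (by nlinarith)
  have hinv : exp (-(c * x)) * exp (c * x) = 1 := by rw [← exp_add, neg_add_cancel, exp_zero]
  have hle_one : exp (-(c * x)) ≤ 1 := exp_le_one_iff.2 (by nlinarith)
  rw [div_mul_eq_mul_div, le_div_iff₀ hc]
  nlinarith [mul_nonneg (sub_nonneg.2 hmono) (sub_nonneg.2 hle_one)]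

theorem exp_mul_add_sq_le {ρ ρ' a b u K : ℝ} (hb : 0 < b) (hdrop : a - b ≤ ρ' * b ^ 2)
    (hu : u ≤ K * a) (hK : 0 ≤ K) (hKb : b ≤ K * (1 - exp (-((ρ - ρ') * b)))) :
    exp (-ρ * b) * u + b ^ 2 ≤ K * b := by
  have ha : a ≤ b * exp (ρ' * b) := by
    nlinarith [add_one_le_exp (ρ' * b)]
  have hexp : exp (-ρ * b) * exp (ρ' * b) = exp (-((ρ - ρ') * b)) := by
    rw [← exp_add]; ring_nf
  calc exp (-ρ * b) * u + b ^ 2 ≤ exp (-ρ * b) * (K * (b * exp (ρ' * b))) + b ^ 2 := by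
        gcongr; exact hu.trans (mul_le_mul_of_nonneg_left ha hK)
    _ = K * b * exp (-((ρ - ρ') * b)) + b ^ 2 := by rw [← hexp]; ring
    _ ≤ K * b := by nlinarith [mul_le_mul_of_nonneg_left hKb hb.le]

theorem isBoundedUnder_div_of_le_exp_mul_add_sq {γ u : ℕ → ℝ} {ρ ρ' M : ℝ} {N : ℕ}
    (hρ' : ρ' < ρ) (hγ : ∀ n, N ≤ n → 0 < γ n) (hM : ∀ n, N ≤ n → γ n ≤ M)
    (hdrop : ∀ n, N ≤ n → γ n - γ (n + 1) ≤ ρ' * γ (n + 1) ^ 2)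
    (hrec : ∀ n, N ≤ n → u (n + 1) ≤ exp (-ρ * γ (n + 1)) * u n + γ (n + 1) ^ 2) :
    IsBoundedUnder (· ≤ ·) atTop (fun n => u n / γ n) := by
  have hc : 0 < ρ - ρ' := sub_pos.2 hρ'
  set K := max (u N / γ N) (exp ((ρ - ρ') * M) / (ρ - ρ'))
  have hK : 0 ≤ K := le_max_of_le_right (by positivity)
  have hbound : ∀ n, N ≤ n → u n ≤ K * γ n := by
    intro n hn
    induction n, hn using Nat.le_induction with
    | base => rw [← div_le_iff₀ (hγ N le_rfl)]; exact le_max_left _ _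
    | succ n hn ih =>
      have hn' : N ≤ n + 1 := hn.trans n.le_succ
      refine (hrec n hn).trans (exp_mul_add_sq_le (hγ _ hn') (hdrop n hn) ih hK ?_)
      calc γ (n + 1) ≤ exp ((ρ - ρ') * M) / (ρ - ρ') * (1 - exp (-((ρ - ρ') * γ (n + 1)))) :=
            le_exp_mul_div_mul_one_sub_exp_neg hc (hγ _ hn').le (hM _ hn')
        _ ≤ K * (1 - exp (-((ρ - ρ') * γ (n + 1)))) := by
            gcongr
            · exact sub_nonneg.2 (exp_le_one_iff.2 (by nlinarith [hγ _ hn']))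
            · exact le_max_right _ _
  exact ⟨K, eventually_map.2 (eventually_atTop.2
    ⟨N, fun n hn => (div_le_iff₀ (hγ n hn)).2 (hbound n hn)⟩)⟩

/-- Let `(γ_n)_{n≥1}` be a non-increasing positive sequence with
`limsup (γ_n − γ_{n+1})/γ_{n+1}^2 = ϖ < ∞`, and `ρ > ϖ`. With
`Γ_n = γ_1 + ⋯ + γ_n` and `u_n = Σ_{k=1}^n γ_k^2 e^{−ρ(Γ_n − Γ_k)}`,
one has `limsup u_n/γ_n < ∞`. -/
theorem stmt_0 (γ : ℕ → ℝ) (hpos : ∀ n, 1 ≤ n → 0 < γ n)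
    (hmono : ∀ n, 1 ≤ n → γ (n + 1) ≤ γ n)
    (ϖ ρ : ℝ)
    (hbdd : IsBoundedUnder (· ≤ ·) atTop (fun n => (γ n - γ (n + 1)) / γ (n + 1) ^ 2))
    (hϖ : limsup (fun n => (γ n - γ (n + 1)) / γ (n + 1) ^ 2) atTop = ϖ)
    (hρ : ϖ < ρ) :
    IsBoundedUnder (· ≤ ·) atTop
      (fun n => (∑ k ∈ Finset.Icc 1 n, γ k ^ 2 *
          Real.exp (-ρ * ((∑ j ∈ Finset.Icc 1 n, γ j) - ∑ j ∈ Finset.Icc 1 k, γ j))) / γ n) := by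
  obtain ⟨ρ', hϖρ', hρ'ρ⟩ := exists_between hρ
  have hratio : ∀ᶠ n in atTop, (γ n - γ (n + 1)) / γ (n + 1) ^ 2 < ρ' :=
    eventually_lt_of_limsup_lt (hϖ ▸ hϖρ') hbdd
  obtain ⟨N, hN⟩ := (hratio.and (eventually_ge_atTop 1)).exists_forall_of_atTop
  have hN1 : 1 ≤ N := (hN N le_rfl).2
  have hpos' : ∀ n, N ≤ n → 0 < γ n := fun n hn => hpos n (hN1.trans hn)
  have hdrop : ∀ n, N ≤ n → γ n - γ (n + 1) ≤ ρ' * γ (n + 1) ^ 2 := fun n hn =>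
    ((div_lt_iff₀ (pow_pos (hpos' _ (hn.trans n.le_succ)) 2)).1 (hN n hn).1).le
  have hanti : ∀ n, N ≤ n → γ n ≤ γ N := fun n hn =>
    antitoneOn_nat_Ici_of_succ_le (fun m hm => hmono m (hN1.trans hm)) (le_refl N) hn hn
  exact isBoundedUnder_div_of_le_exp_mul_add_sq (u := discountedSum γ (fun k => γ k ^ 2) ρ)
    hρ'ρ hpos' hanti hdrop fun n _ => (discountedSum_succ γ _ ρ n).le
end

section
/- Let (γ_n)_{n≥1} be a non-increasing positive sequence with Σ_n γ_n = ∞ and ϖ := limsup_n (γ_n − γ_{n+1})/γ_{n+1}^2 < ∞. Let ρ > ϖ and a ∈ (0, ρ/ϖ) (any a > 0 if ϖ = 0). Then e^{−ρ Γ_n} = o(γ_n^a) as n → ∞, where Γ_n = γ_1 + ⋯ + γ_n. -/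
open Filter Asymptotics

/-! For `n` large the ratio `(γ_n − γ_{n+1})/γ_{n+1}^2` is at most some `c` with `ϖ < c < ρ/a`.
Since `log x − log y ≤ (x − y)/y`, each step gives `log γ_n − log γ_{n+1} ≤ c γ_{n+1}`, and
telescoping yields `log γ_n ≥ C − c Γ_n`. Hence `−ρ Γ_n − a log γ_n ≤ (a c − ρ) Γ_n + C' → −∞`,
which is `e^{−ρ Γ_n} / γ_n^a → 0`. -/

lemma Real.log_sub_log_le_sub_div {x y : ℝ} (hx : 0 < x) (hy : 0 < y) :
    Real.log x - Real.log y ≤ (x - y) / y := by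
  have h := Real.log_le_sub_one_of_pos (div_pos hx hy)
  rwa [Real.log_div hx.ne' hy.ne', div_sub_one hy.ne'] at h

lemma Real.log_sub_log_le_mul_of_sub_div_sq_le {x y c : ℝ} (hx : 0 < x) (hy : 0 < y)
    (h : (x - y) / y ^ 2 ≤ c) : Real.log x - Real.log y ≤ c * y :=
  calc Real.log x - Real.log y ≤ (x - y) / y := Real.log_sub_log_le_sub_div hx hy
    _ = (x - y) / y ^ 2 * y := by field_simp
    _ ≤ c * y := mul_le_mul_of_nonneg_right h hy.le

lemma sub_le_sum_Icc_sub_of_sub_succ_le {u v : ℕ → ℝ} {N : ℕ}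
    (h : ∀ n, N ≤ n → u n - u (n + 1) ≤ v (n + 1)) {n : ℕ} (hn : N ≤ n) :
    u N - u n ≤ ∑ k ∈ Finset.Icc 1 n, v k - ∑ k ∈ Finset.Icc 1 N, v k := by
  induction n, hn using Nat.le_induction with
  | base => simp
  | succ n hn ih =>
    rw [Finset.sum_Icc_succ_top (Nat.le_add_left 1 n)]
    linarith [h n hn]

lemma isLittleO_exp_rpow_of_tendsto_sub_mul_log {α : Type*} {l : Filter α} {F g : α → ℝ}
    {a : ℝ} (hg : ∀ᶠ x in l, 0 < g x) (h : Tendsto (fun x => F x - a * Real.log (g x)) l atBot) :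
    (fun x => Real.exp (F x)) =o[l] (fun x => g x ^ a) := by
  refine (isLittleO_iff_tendsto' ?_).mpr ?_
  · filter_upwards [hg] with x hx hx0
    exact absurd hx0 (Real.rpow_pos_of_pos hx a).ne'
  · refine (Real.tendsto_exp_atBot.comp h).congr' ?_
    filter_upwards [hg] with x hx
    rw [Function.comp_apply, Real.exp_sub, Real.rpow_def_of_pos hx, mul_comm]

theorem stmt_1_general (γ : ℕ → ℝ) (hpos : ∀ n, 1 ≤ n → 0 < γ n)
    (hdiv : Tendsto (fun n => ∑ k ∈ Finset.Icc 1 n, γ k) atTop atTop)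
    (ϖ ρ a : ℝ)
    (hbdd : IsBoundedUnder (· ≤ ·) atTop (fun n => (γ n - γ (n + 1)) / γ (n + 1) ^ 2))
    (hϖ : limsup (fun n => (γ n - γ (n + 1)) / γ (n + 1) ^ 2) atTop = ϖ)
    (ha : 0 < a) (haϖ : a * ϖ < ρ) :
    (fun n => Real.exp (-ρ * ∑ k ∈ Finset.Icc 1 n, γ k)) =o[atTop] (fun n => γ n ^ a) := by
  set Γ : ℕ → ℝ := fun n => ∑ k ∈ Finset.Icc 1 n, γ k
  obtain ⟨c, hϖc, hcρ⟩ := exists_between ((lt_div_iff₀' ha).mpr haϖ)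
  have hac : a * c < ρ := (lt_div_iff₀' ha).mp hcρ
  obtain ⟨N, hN⟩ := eventually_atTop.mp <|
    ((eventually_lt_of_limsup_lt (hϖ ▸ hϖc) hbdd).and (eventually_ge_atTop 1))
  have hstep : ∀ n, N ≤ n → Real.log (γ n) - Real.log (γ (n + 1)) ≤ c * γ (n + 1) :=
    fun n hn => Real.log_sub_log_le_mul_of_sub_div_sq_le (hpos n (hN n hn).2)
      (hpos (n + 1) (Nat.le_add_left 1 n)) (hN n hn).1.le
  have hlog : ∀ n, N ≤ n → Real.log (γ N) - Real.log (γ n) ≤ c * (Γ n - Γ N) := by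
    intro n hn
    simpa only [Γ, Finset.mul_sum, mul_sub] using
      sub_le_sum_Icc_sub_of_sub_succ_le (u := fun n => Real.log (γ n)) (v := fun n => c * γ n)
        hstep hn
  refine isLittleO_exp_rpow_of_tendsto_sub_mul_log ?_ ?_
  · filter_upwards [eventually_ge_atTop 1] with n hn using hpos n hn
  · refine tendsto_atBot_mono' _ ?_ <| tendsto_atBot_add_const_right _
      (-a * Real.log (γ N) - a * c * Γ N) (hdiv.const_mul_atTop_of_neg (sub_neg.mpr hac))
    filter_upwards [eventually_ge_atTop N] with n hn
    nlinarith [hlog n hn]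

/-- For a non-increasing positive sequence with divergent sum and
`ϖ = limsup (γ_n − γ_{n+1})/γ_{n+1}^2 < ∞`, if `ρ > ϖ`, `a > 0` and `a·ϖ < ρ`
(i.e. `a ∈ (0, ρ/ϖ)`, any `a > 0` if `ϖ = 0`), then `e^{−ρΓ_n} = o(γ_n^a)`. -/
theorem stmt_1 (γ : ℕ → ℝ) (hpos : ∀ n, 1 ≤ n → 0 < γ n)
    (hmono : ∀ n, 1 ≤ n → γ (n + 1) ≤ γ n)
    (hdiv : Tendsto (fun n => ∑ k ∈ Finset.Icc 1 n, γ k) atTop atTop)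
    (ϖ ρ a : ℝ)
    (hbdd : IsBoundedUnder (· ≤ ·) atTop (fun n => (γ n - γ (n + 1)) / γ (n + 1) ^ 2))
    (hϖ : limsup (fun n => (γ n - γ (n + 1)) / γ (n + 1) ^ 2) atTop = ϖ)
    (hρ : ϖ < ρ) (ha : 0 < a) (haϖ : a * ϖ < ρ) :
    (fun n => Real.exp (-ρ * ∑ k ∈ Finset.Icc 1 n, γ k)) =o[atTop] (fun n => γ n ^ a) :=
  stmt_1_general γ hpos hdiv ϖ ρ a hbdd hϖ ha haϖ
end

section
/- Let (γ_n)_{n≥1} be a non-increasing positive sequence with Σ_n γ_n = ∞, lim_n γ_n = 0, and ϖ := limsup_n (γ_n − γ_{n+1})/γ_{n+1}^2 < ∞. For t ≥ 0 set N(t) = max{k ≥ 0 : Γ_k ≤ t}, where Γ_n = γ_1 + ⋯ + γ_n. Then for every T > 0, limsup_n γ_{N(Γ_n − T)}/γ_n < ∞. -/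
open Filter

/-! The hypothesis on `ϖ` says `γ_k ≤ γ_{k+1} (1 + C γ_{k+1}) ≤ γ_{k+1} e^{C γ_{k+1}}` for large
`k`; chaining these from `m` to `n` gives `γ_m ≤ γ_n e^{C (Γ_n − Γ_m)}`. For `m = N(Γ_n − T)` the
gap `Γ_n − Γ_m` is less than `T + γ_{m+1} ≤ T + γ_1`, so `γ_m / γ_n ≤ e^{C (T + γ_1)}`. -/

lemma le_mul_exp_of_sub_div_sq_le {a b C : ℝ} (hb : 0 < b) (h : (a - b) / b ^ 2 ≤ C) :
    a ≤ b * Real.exp (C * b) := by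
  have hsub : a - b ≤ C * b ^ 2 := (div_le_iff₀ (by positivity)).1 h
  calc a ≤ b * (1 + C * b) := by nlinarith
    _ ≤ b * Real.exp (C * b) := by gcongr; linarith [Real.add_one_le_exp (C * b)]

lemma le_mul_exp_sub_of_le_mul_exp_succ {γ Γ : ℕ → ℝ} {C : ℝ} {m n : ℕ}
    (hΓ : ∀ k, Γ (k + 1) = Γ k + γ (k + 1))
    (hstep : ∀ k, m ≤ k → γ k ≤ γ (k + 1) * Real.exp (C * γ (k + 1))) (hmn : m ≤ n) :
    γ m ≤ γ n * Real.exp (C * (Γ n - Γ m)) := by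
  induction n, hmn using Nat.le_induction with
  | base => simp
  | succ n hmn ih =>
    calc γ m ≤ γ n * Real.exp (C * (Γ n - Γ m)) := ih
      _ ≤ γ (n + 1) * Real.exp (C * γ (n + 1)) * Real.exp (C * (Γ n - Γ m)) := by
        gcongr; exact hstep n hmn
      _ = γ (n + 1) * Real.exp (C * (Γ (n + 1) - Γ m)) := by
        rw [hΓ n, mul_assoc, ← Real.exp_add]
        ring_nf

section LastIndexBelow

variable {Γ : ℕ → ℝ}

lemma bddAbove_setOf_le_of_tendsto_atTop (hΓ : Tendsto Γ atTop atTop) (x : ℝ) :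
    BddAbove {k | Γ k ≤ x} := by
  obtain ⟨M, hM⟩ := eventually_atTop.1 (hΓ.eventually_gt_atTop x)
  exact ⟨M, fun k hk => le_of_not_gt fun hMk => (hM k hMk.le).not_ge hk⟩

lemma le_sSup_setOf_le (hΓ : Tendsto Γ atTop atTop) {x : ℝ} {m : ℕ} (hm : Γ m ≤ x) :
    m ≤ sSup {k | Γ k ≤ x} :=
  le_csSup (bddAbove_setOf_le_of_tendsto_atTop hΓ x) hm

lemma sSup_setOf_le_mem (hΓ : Tendsto Γ atTop atTop) {x : ℝ} {m : ℕ} (hm : Γ m ≤ x) :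
    Γ (sSup {k | Γ k ≤ x}) ≤ x :=
  Nat.sSup_mem ⟨m, hm⟩ (bddAbove_setOf_le_of_tendsto_atTop hΓ x)

lemma lt_succ_sSup_setOf_le (hΓ : Tendsto Γ atTop atTop) (x : ℝ) :
    x < Γ (sSup {k | Γ k ≤ x} + 1) :=
  lt_of_not_ge fun h => (le_csSup (bddAbove_setOf_le_of_tendsto_atTop hΓ x) h).not_gt
    (Nat.lt_succ_self _)

end LastIndexBelow

theorem stmt_2_general (γ : ℕ → ℝ) (hpos : ∀ n, 1 ≤ n → 0 < γ n)
    (hmono : ∀ n, 1 ≤ n → γ (n + 1) ≤ γ n)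
    (hdiv : Tendsto (fun n => ∑ k ∈ Finset.Icc 1 n, γ k) atTop atTop)
    (hbdd : IsBoundedUnder (· ≤ ·) atTop (fun n => (γ n - γ (n + 1)) / γ (n + 1) ^ 2))
    (T : ℝ) (hT : 0 < T) :
    IsBoundedUnder (· ≤ ·) atTop
      (fun n => γ (sSup {k : ℕ |
          (∑ j ∈ Finset.Icc 1 k, γ j) ≤ (∑ j ∈ Finset.Icc 1 n, γ j) - T}) / γ n) := by
  set Γ : ℕ → ℝ := fun n => ∑ j ∈ Finset.Icc 1 n, γ j
  have hΓ (k : ℕ) : Γ (k + 1) = Γ k + γ (k + 1) := Finset.sum_Icc_succ_top (by omega) γ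
  have hΓmono : Monotone Γ :=
    monotone_nat_of_le_succ fun k => by rw [hΓ]; linarith [hpos (k + 1) (by omega)]
  obtain ⟨C₀, hC₀⟩ := hbdd
  obtain ⟨n₀, hn₀⟩ := eventually_atTop.1 (eventually_map.1 hC₀)
  set C := max C₀ 0
  have hstep (k : ℕ) (hk : n₀ ≤ k) : γ k ≤ γ (k + 1) * Real.exp (C * γ (k + 1)) :=
    le_mul_exp_of_sub_div_sq_le (hpos _ (by omega)) ((hn₀ k hk).trans (le_max_left _ _))
  refine ⟨Real.exp (C * (T + γ 1)), eventually_map.2 ?_⟩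
  filter_upwards [hdiv.eventually_ge_atTop (Γ n₀ + T), eventually_ge_atTop 1] with n hn hn1
  set m := sSup {k | Γ k ≤ Γ n - T}
  have hm₀ : n₀ ≤ m := le_sSup_setOf_le hdiv (by linarith)
  have hmΓ : Γ m ≤ Γ n - T := sSup_setOf_le_mem hdiv (m := n₀) (by linarith)
  have hmn : m ≤ n := (hΓmono.reflect_lt (by linarith)).le
  have hgap : Γ n - Γ m ≤ T + γ 1 := by
    have hsucc := lt_succ_sSup_setOf_le hdiv (Γ n - T)
    rw [hΓ] at hsucc
    linarith [antitoneOn_nat_Ici_of_succ_le hmono (Set.mem_Ici.2 le_rfl)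
      (Set.mem_Ici.2 (by omega : 1 ≤ m + 1)) (by omega : 1 ≤ m + 1)]
  have hγn := hpos n hn1
  rw [div_le_iff₀ hγn]
  calc γ m ≤ γ n * Real.exp (C * (Γ n - Γ m)) :=
        le_mul_exp_sub_of_le_mul_exp_succ hΓ (fun k hk => hstep k (hm₀.trans hk)) hmn
    _ ≤ γ n * Real.exp (C * (T + γ 1)) := by gcongr
    _ = Real.exp (C * (T + γ 1)) * γ n := mul_comm _ _

/-- For a non-increasing positive step sequence with `γ_n → 0`, `ΣΓ_n = ∞` and
`ϖ = limsup (γ_n − γ_{n+1})/γ_{n+1}^2 < ∞`, setting `N(t) = max{k : Γ_k ≤ t}`,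
for every `T > 0` one has `limsup γ_{N(Γ_n − T)}/γ_n < ∞`. -/
theorem stmt_2 (γ : ℕ → ℝ) (hpos : ∀ n, 1 ≤ n → 0 < γ n)
    (hmono : ∀ n, 1 ≤ n → γ (n + 1) ≤ γ n)
    (hlim : Tendsto γ atTop (nhds 0))
    (hdiv : Tendsto (fun n => ∑ k ∈ Finset.Icc 1 n, γ k) atTop atTop)
    (hbdd : IsBoundedUnder (· ≤ ·) atTop (fun n => (γ n - γ (n + 1)) / γ (n + 1) ^ 2))
    (T : ℝ) (hT : 0 < T) :
    IsBoundedUnder (· ≤ ·) atTop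
      (fun n => γ (sSup {k : ℕ |
          (∑ j ∈ Finset.Icc 1 k, γ j) ≤ (∑ j ∈ Finset.Icc 1 n, γ j) - T}) / γ n) :=
  stmt_2_general γ hpos hmono hdiv hbdd T hT
end

section
/- Suppose there exists c > 0 and n_0 such that for all n ≥ n_0, γ_n/γ_{n+1} ≤ e^{c γ_{n+1}}. Then the sequence v_n defined by v_0 = 0 and v_{n+1} = v_n (γ_n/γ_{n+1}) e^{−ρ γ_{n+1}} + γ_{n+1} is bounded whenever ρ > c and the γ_n are positive, non-increasing with Σγ_n = ∞. -/
open Filter Real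

/-!
For `n ≥ max n₀ 1` the ratio hypothesis gives `v_{n+1} ≤ v_n e^{-δγ_{n+1}} + γ_{n+1}` with
`δ = ρ - c > 0`. Since `γ_{n+1} ≤ γ_1`, a level `B ≥ γ_1 + 1/δ` is invariant under
`x ↦ x e^{-δg} + g` for `0 ≤ g ≤ γ_1`: the contraction `B (1 - e^{-δg}) ≥ B δg / (1 + δg)`
outweighs the increment `g`.
-/

theorem mul_exp_neg_add_le {δ G B x g : ℝ} (hδ : 0 < δ) (hg : 0 ≤ g) (hgG : g ≤ G)
    (hB : G + δ⁻¹ ≤ B) (hx : x ≤ B) : x * exp (-(δ * g)) + g ≤ B := by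
  have hE : 0 < exp (δ * g) := exp_pos _
  have hexp : 1 + δ * g ≤ exp (δ * g) := by linarith [add_one_le_exp (δ * g)]
  have hδB : 1 + δ * G ≤ δ * B := by
    have := mul_le_mul_of_nonneg_left hB hδ.le
    rwa [mul_add, mul_inv_cancel₀ hδ.ne', add_comm] at this
  have hgB : g ≤ B := by nlinarith
  rw [exp_neg, ← div_eq_mul_inv, div_add' _ _ _ hE.ne', div_le_iff₀ hE]
  -- `B e^t - x - g e^t ≥ (B - g)(e^t - 1 - δg) + g (δB - 1 - δg)` with `t = δg`
  nlinarith [mul_nonneg (sub_nonneg.2 hgB) (sub_nonneg.2 hexp),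
    mul_nonneg hg (show 0 ≤ δ * B - 1 - δ * g by nlinarith)]

theorem bddAbove_range_of_le_mul_exp_neg_add {u a : ℕ → ℝ} {δ A : ℝ} {N : ℕ} (hδ : 0 < δ)
    (ha : ∀ n, N ≤ n → 0 ≤ a (n + 1)) (haA : ∀ n, N ≤ n → a (n + 1) ≤ A)
    (hu : ∀ n, N ≤ n → u (n + 1) ≤ u n * exp (-(δ * a (n + 1))) + a (n + 1)) :
    BddAbove (Set.range u) := by
  have hbound : ∀ n, N ≤ n → u n ≤ max (u N) (A + δ⁻¹) := by
    intro n hn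
    induction n, hn using Nat.le_induction with
    | base => exact le_max_left _ _
    | succ n hn ih =>
      exact (hu n hn).trans
        (mul_exp_neg_add_le hδ (ha n hn) (haA n hn) (le_max_right _ _) ih)
  exact (isBoundedUnder_of_eventually_le (eventually_atTop.2 ⟨N, hbound⟩)).bddAbove_range

theorem stmt_3_general (γ : ℕ → ℝ) (ρ c : ℝ) (n₀ : ℕ)
    (hpos : ∀ n, 1 ≤ n → 0 < γ n)
    (hmono : ∀ n, 1 ≤ n → γ (n + 1) ≤ γ n)
    (hρ : c < ρ)
    (hratio : ∀ n, n₀ ≤ n → γ n / γ (n + 1) ≤ Real.exp (c * γ (n + 1)))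
    (v : ℕ → ℝ) (hv0 : v 0 = 0)
    (hvrec : ∀ n, v (n + 1) = v n * (γ n / γ (n + 1)) * Real.exp (-ρ * γ (n + 1)) + γ (n + 1)) :
    ∃ M : ℝ, ∀ n, |v n| ≤ M := by
  have hv_nonneg : ∀ n, 0 ≤ v n := by
    intro n
    induction n with
    | zero => exact hv0.ge
    | succ n ih =>
      have hγ := hpos (n + 1) (by omega)
      rw [hvrec n]
      rcases Nat.eq_zero_or_pos n with rfl | hn
      · simp [hv0, hγ.le]
      · have := hpos n hn
        positivity
  have hγ_le : ∀ n, 1 ≤ n → γ n ≤ γ 1 := fun n hn =>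
    antitoneOn_nat_Ici_of_succ_le hmono (Set.mem_Ici.2 le_rfl) (Set.mem_Ici.2 hn) hn
  have hstep : ∀ n, max n₀ 1 ≤ n →
      v (n + 1) ≤ v n * exp (-((ρ - c) * γ (n + 1))) + γ (n + 1) := by
    intro n hn
    have hratio_exp : γ n / γ (n + 1) * exp (-ρ * γ (n + 1)) ≤ exp (-((ρ - c) * γ (n + 1))) :=
      calc γ n / γ (n + 1) * exp (-ρ * γ (n + 1))
          ≤ exp (c * γ (n + 1)) * exp (-ρ * γ (n + 1)) := by
            gcongr; exact hratio n (le_of_max_le_left hn)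
        _ = exp (-((ρ - c) * γ (n + 1))) := by rw [← exp_add]; ring_nf
    rw [hvrec n, mul_assoc]
    gcongr
    exact hv_nonneg n
  obtain ⟨M, hM⟩ := bddAbove_range_of_le_mul_exp_neg_add (sub_pos.2 hρ)
    (fun n _ => (hpos (n + 1) (by omega)).le) (fun n _ => hγ_le (n + 1) (by omega)) hstep
  exact ⟨M, fun n => (abs_of_nonneg (hv_nonneg n)).trans_le (hM ⟨n, rfl⟩)⟩

/-- If for some `c > 0` and `n₀`, `γ_n/γ_{n+1} ≤ e^{cγ_{n+1}}` for all `n ≥ n₀`,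
then the sequence defined by `v_0 = 0`, `v_{n+1} = v_n (γ_n/γ_{n+1}) e^{−ργ_{n+1}} + γ_{n+1}`
is bounded whenever `ρ > c` and `(γ_n)` is positive, non-increasing with `Σγ_n = ∞`. -/
theorem stmt_3 (γ : ℕ → ℝ) (ρ c : ℝ) (n₀ : ℕ)
    (hpos : ∀ n, 1 ≤ n → 0 < γ n)
    (hmono : ∀ n, 1 ≤ n → γ (n + 1) ≤ γ n)
    (hdiv : Tendsto (fun n => ∑ k ∈ Finset.Icc 1 n, γ k) atTop atTop)
    (hc : 0 < c) (hρ : c < ρ)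
    (hratio : ∀ n, n₀ ≤ n → γ n / γ (n + 1) ≤ Real.exp (c * γ (n + 1)))
    (v : ℕ → ℝ) (hv0 : v 0 = 0)
    (hvrec : ∀ n, v (n + 1) = v n * (γ n / γ (n + 1)) * Real.exp (-ρ * γ (n + 1)) + γ (n + 1)) :
    ∃ M : ℝ, ∀ n, |v n| ≤ M :=
  stmt_3_general γ ρ c n₀ hpos hmono hρ hratio v hv0 hvrec
end

section
/- Let b : ℝ^d → ℝ^d be Lipschitz continuous with constant [b]_Lip, and suppose there exist α > 0 and R > 0 such that ⟨b(x) − b(y), x − y⟩ ≤ −α|x − y|^2 for all x, y ∉ B(0,R). Then, setting R_0 = 4R(1 + [b]_Lip/α), for all x, y ∈ ℝ^d with |x − y| ≥ R_0 one has ⟨b(x) − b(y), x − y⟩ ≤ −(α/2)|x − y|^2. In particular ⟨b(x) − b(y), x − y⟩ ≤ [b]_Lip R_0^2 − (α/2)|x − y|^2 for all x, y ∈ ℝ^d. -/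
open scoped RealInnerProductSpace

/-!
If `x` lies in the ball and `y` outside it, push `x` further away from `y`, to
`x' = x + s (x - y)` with `s‖x - y‖ > 2R`, so that `x'` also lies outside the ball. Then
`⟪b x - b y, x - y⟫` splits into `⟪b x - b x', x - y⟫ ≤ L s ‖x - y‖²` (Lipschitz) and
`(1 + s)⁻¹ ⟪b x' - b y, x' - y⟫ ≤ -α (1 + s) ‖x - y‖²` (dissipativity), giving the bound
`(L s - α) ‖x - y‖²` whenever not both points lie in the ball. For `‖x - y‖ ≥ R₀` both points
cannot lie in the ball, and `s = α / (2L + α)` makes `L s ≤ α / 2`. For `‖x - y‖ < R₀` take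
`s = R₀ / ‖x - y‖` instead; when both points lie in the ball, use `α ≤ L` (dissipativity
and Lipschitz continuity along one ray outside the ball) together with Cauchy–Schwarz.
-/

section Dissipative

variable {E : Type*} [NormedAddCommGroup E] [InnerProductSpace ℝ E] {b : E → E} {L α R : ℝ}

theorem inner_sub_sub_swap (b : E → E) (x y : E) :
    ⟪b y - b x, y - x⟫ = ⟪b x - b y, x - y⟫ := by
  rw [← neg_sub (b x), ← neg_sub x, inner_neg_neg]

theorem abs_inner_sub_le_of_lipschitz (hLip : ∀ x y, ‖b x - b y‖ ≤ L * ‖x - y‖) (x y : E) :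
    |⟪b x - b y, x - y⟫| ≤ L * ‖x - y‖ ^ 2 :=
  calc |⟪b x - b y, x - y⟫| ≤ ‖b x - b y‖ * ‖x - y‖ := abs_real_inner_le_norm _ _
    _ ≤ L * ‖x - y‖ * ‖x - y‖ := by gcongr; exact hLip x y
    _ = L * ‖x - y‖ ^ 2 := by ring

theorem rate_le_lipschitz_of_dissipative [Nontrivial E]
    (hLip : ∀ x y, ‖b x - b y‖ ≤ L * ‖x - y‖)
    (hdiss : ∀ x y : E, R < ‖x‖ → R < ‖y‖ → ⟪b x - b y, x - y⟫ ≤ -α * ‖x - y‖ ^ 2) :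
    α ≤ L := by
  obtain ⟨v, hv⟩ := exists_norm_eq E (by positivity : 0 ≤ |R| + 1)
  have hvR : R < ‖v‖ := by linarith [le_abs_self R]
  have hdiff : v - (2 : ℝ) • v = -v := by module
  have h2v : R < ‖(2 : ℝ) • v‖ := by
    rw [norm_smul, Real.norm_two]; linarith [norm_nonneg v]
  have hupper := hdiss v ((2 : ℝ) • v) hvR h2v
  have hlip := abs_inner_sub_le_of_lipschitz hLip v ((2 : ℝ) • v)
  rw [hdiff, norm_neg] at hupper hlip
  have hlower := neg_abs_le ⟪b v - b ((2 : ℝ) • v), -v⟫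
  have hpos : 0 < ‖v‖ ^ 2 := by rw [hv]; positivity
  nlinarith

theorem inner_sub_le_of_norm_le_of_lt_norm (hLip : ∀ x y, ‖b x - b y‖ ≤ L * ‖x - y‖)
    (hdiss : ∀ x y : E, R < ‖x‖ → R < ‖y‖ → ⟪b x - b y, x - y⟫ ≤ -α * ‖x - y‖ ^ 2)
    {x y : E} {s : ℝ} (hx : ‖x‖ ≤ R) (hy : R < ‖y‖) (hs : 0 ≤ s)
    (hsr : 2 * R < s * ‖x - y‖) :
    ⟪b x - b y, x - y⟫ ≤ (L * s - α * (1 + s)) * ‖x - y‖ ^ 2 := by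
  set x' := x + s • (x - y)
  have hx'y : x' - y = (1 + s) • (x - y) := by module
  have hxx' : x - x' = -(s • (x - y)) := by module
  have hnxx' : ‖x - x'‖ = s * ‖x - y‖ := by
    rw [hxx', norm_neg, norm_smul, Real.norm_of_nonneg hs]
  have hx' : R < ‖x'‖ := by
    have := norm_sub_le x' x
    rw [norm_sub_rev, hnxx'] at this
    linarith
  have hnear : ⟪b x - b x', x - y⟫ ≤ L * s * ‖x - y‖ ^ 2 :=
    calc ⟪b x - b x', x - y⟫ ≤ ‖b x - b x'‖ * ‖x - y‖ := real_inner_le_norm _ _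
      _ ≤ L * ‖x - x'‖ * ‖x - y‖ := by gcongr; exact hLip x x'
      _ = L * s * ‖x - y‖ ^ 2 := by rw [hnxx']; ring
  have hfar : ⟪b x' - b y, x - y⟫ ≤ -α * (1 + s) * ‖x - y‖ ^ 2 := by
    have h := hdiss x' y hx' hy
    rw [hx'y, inner_smul_right, norm_smul, Real.norm_of_nonneg (by positivity)] at h
    refine le_of_mul_le_mul_left ?_ (by positivity : (0 : ℝ) < 1 + s)
    linarith
  calc ⟪b x - b y, x - y⟫ = ⟪b x - b x', x - y⟫ + ⟪b x' - b y, x - y⟫ := by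
        rw [← inner_add_left, sub_add_sub_cancel]
    _ ≤ (L * s - α * (1 + s)) * ‖x - y‖ ^ 2 := by linarith

theorem inner_sub_le_of_lt_norm_or (hL : 0 ≤ L) (hα : 0 ≤ α)
    (hLip : ∀ x y, ‖b x - b y‖ ≤ L * ‖x - y‖)
    (hdiss : ∀ x y : E, R < ‖x‖ → R < ‖y‖ → ⟪b x - b y, x - y⟫ ≤ -α * ‖x - y‖ ^ 2)
    {x y : E} {s : ℝ} (hs : 0 ≤ s) (hsr : 2 * R < s * ‖x - y‖)
    (hout : R < ‖x‖ ∨ R < ‖y‖) :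
    ⟪b x - b y, x - y⟫ ≤ (L * s - α) * ‖x - y‖ ^ 2 := by
  have hLs : 0 ≤ L * s * ‖x - y‖ ^ 2 := by positivity
  have hαs : 0 ≤ α * s * ‖x - y‖ ^ 2 := by positivity
  by_cases hx : R < ‖x‖ <;> by_cases hy : R < ‖y‖
  · linarith [hdiss x y hx hy]
  · rw [norm_sub_rev] at hsr hLs hαs ⊢
    rw [← inner_sub_sub_swap]
    linarith [inner_sub_le_of_norm_le_of_lt_norm hLip hdiss (not_lt.1 hy) hx hs hsr]
  · linarith [inner_sub_le_of_norm_le_of_lt_norm hLip hdiss (not_lt.1 hx) hy hs hsr]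
  · exact absurd hout (by tauto)

theorem inner_sub_le_neg_half_mul_sq (hL : 0 ≤ L) (hα : 0 < α) (hR : 0 < R)
    (hLip : ∀ x y, ‖b x - b y‖ ≤ L * ‖x - y‖)
    (hdiss : ∀ x y : E, R < ‖x‖ → R < ‖y‖ → ⟪b x - b y, x - y⟫ ≤ -α * ‖x - y‖ ^ 2)
    {x y : E} (hr : 4 * R * (1 + L / α) ≤ ‖x - y‖) :
    ⟪b x - b y, x - y⟫ ≤ -(α / 2) * ‖x - y‖ ^ 2 := by
  have hR₀ : 4 * R * (1 + L / α) = 4 * R * (L + α) / α := by field_simp; ring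
  rw [hR₀, div_le_iff₀ hα] at hr
  have hout : R < ‖x‖ ∨ R < ‖y‖ := by
    by_contra! h
    nlinarith [norm_sub_le x y]
  set s := α / (2 * L + α)
  have hs : 0 ≤ s := by positivity
  have hLs : L * s ≤ α / 2 := by
    rw [mul_div_assoc', div_le_iff₀ (by positivity)]; nlinarith
  have hsr : 2 * R < s * ‖x - y‖ := by
    rw [div_mul_eq_mul_div, lt_div_iff₀ (by positivity)]; nlinarith
  calc ⟪b x - b y, x - y⟫ ≤ (L * s - α) * ‖x - y‖ ^ 2 :=
        inner_sub_le_of_lt_norm_or hL hα.le hLip hdiss hs hsr hout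
    _ ≤ -(α / 2) * ‖x - y‖ ^ 2 := by gcongr; linarith

theorem inner_sub_le_sub_half_mul_sq (hL : 0 ≤ L) (hα : 0 < α) (hR : 0 < R)
    (hLip : ∀ x y, ‖b x - b y‖ ≤ L * ‖x - y‖)
    (hdiss : ∀ x y : E, R < ‖x‖ → R < ‖y‖ → ⟪b x - b y, x - y⟫ ≤ -α * ‖x - y‖ ^ 2)
    (x y : E) :
    ⟪b x - b y, x - y⟫ ≤ L * (4 * R * (1 + L / α)) ^ 2 - (α / 2) * ‖x - y‖ ^ 2 := by
  set R₀ := 4 * R * (1 + L / α)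
  have hR₀ : 4 * R ≤ R₀ := le_mul_of_one_le_right (by positivity) (by simp; positivity)
  have hLR₀ : 0 ≤ L * R₀ ^ 2 := by positivity
  rcases eq_or_ne x y with rfl | hne
  · simpa using hLR₀
  have hr : 0 < ‖x - y‖ := norm_pos_iff.2 (sub_ne_zero.2 hne)
  rcases le_or_gt R₀ ‖x - y‖ with hfar | hnear
  · linarith [inner_sub_le_neg_half_mul_sq hL hα hR hLip hdiss hfar]
  by_cases hout : R < ‖x‖ ∨ R < ‖y‖
  · have hsr : 2 * R < R₀ / ‖x - y‖ * ‖x - y‖ := by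
      rw [div_mul_cancel₀ _ hr.ne']; linarith
    calc ⟪b x - b y, x - y⟫ ≤ (L * (R₀ / ‖x - y‖) - α) * ‖x - y‖ ^ 2 :=
          inner_sub_le_of_lt_norm_or hL hα.le hLip hdiss (by positivity) hsr hout
      _ = L * R₀ * ‖x - y‖ - α * ‖x - y‖ ^ 2 := by field_simp
      _ ≤ L * R₀ * R₀ - α * ‖x - y‖ ^ 2 := by gcongr
      _ ≤ L * R₀ ^ 2 - (α / 2) * ‖x - y‖ ^ 2 := by nlinarith
  · have : Nontrivial E := nontrivial_of_ne x y hne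
    have hαL := rate_le_lipschitz_of_dissipative hLip hdiss
    have hsmall : ‖x - y‖ ≤ 2 * R := by
      push Not at hout
      linarith [norm_sub_le x y]
    have hsq : ‖x - y‖ ^ 2 ≤ R₀ ^ 2 / 4 := by nlinarith
    calc ⟪b x - b y, x - y⟫ ≤ L * ‖x - y‖ ^ 2 :=
          (le_abs_self _).trans (abs_inner_sub_le_of_lipschitz hLip x y)
      _ ≤ L * R₀ ^ 2 - (α / 2) * ‖x - y‖ ^ 2 := by nlinarith

end Dissipative

/-- If `b : ℝ^d → ℝ^d` is `L`-Lipschitz and `⟨b(x)−b(y), x−y⟩ ≤ −α|x−y|²` for all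
`x, y` outside the closed ball `B(0,R)`, then with `R₀ = 4R(1 + L/α)` one has
`⟨b(x)−b(y), x−y⟩ ≤ −(α/2)|x−y|²` whenever `|x−y| ≥ R₀`, and in particular
`⟨b(x)−b(y), x−y⟩ ≤ L R₀² − (α/2)|x−y|²` for all `x, y`. -/
theorem stmt_4 {d : ℕ}
    (b : EuclideanSpace ℝ (Fin d) → EuclideanSpace ℝ (Fin d))
    (L α R : ℝ) (hL : 0 ≤ L)
    (hLip : ∀ x y, ‖b x - b y‖ ≤ L * ‖x - y‖)
    (hα : 0 < α) (hR : 0 < R)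
    (hdiss : ∀ x y : EuclideanSpace ℝ (Fin d), R < ‖x‖ → R < ‖y‖ →
      ⟪b x - b y, x - y⟫ ≤ -α * ‖x - y‖ ^ 2) :
    (∀ x y : EuclideanSpace ℝ (Fin d), 4 * R * (1 + L / α) ≤ ‖x - y‖ →
      ⟪b x - b y, x - y⟫ ≤ -(α / 2) * ‖x - y‖ ^ 2) ∧
    (∀ x y : EuclideanSpace ℝ (Fin d),
      ⟪b x - b y, x - y⟫ ≤ L * (4 * R * (1 + L / α)) ^ 2 - (α / 2) * ‖x - y‖ ^ 2) :=
  ⟨fun _ _ hr ↦ inner_sub_le_neg_half_mul_sq hL hα hR hLip hdiss hr,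
    inner_sub_le_sub_half_mul_sq hL hα hR hLip hdiss⟩
end

section
/- Let V : ℝ^d → (0,∞) be such that √V is Lipschitz continuous with constant [√V]_Lip, and let Φ : ℝ^d → E (E normed) be Borel with |Φ| ≤ C·V^r for some C, r > 0. Then for any ℝ^d-valued random vectors Y, Z with suitable integrability and any p ∈ [1,∞): ‖ sup_{ξ ∈ (Y,Z)} |Φ(ξ)| ‖_p ≤ C' ( ‖V(Y)∧V(Z)‖_{rp}^r + ‖Y − Z‖_{2rp}^{2r} ) for a constant C' depending on Φ, V, r (where (Y,Z) denotes the open segment between Y and Z). -/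
/-!
Every point `ξ` of the segment `[y, z]` lies within `‖y - z‖` of both endpoints, so the Lipschitz
bound on `√V` gives `√V(ξ) ≤ √(V y ⊓ V z) + L‖y - z‖`; raising to the power `2r` bounds
`sup_{ξ ∈ (Y,Z)} ‖Φ ξ‖` pointwise by a constant multiple of `(V Y ⊓ V Z)^r + ‖Y - Z‖^{2r}`. The
`L^p` estimate then follows from `(a + b)^p ≤ 2^p (a^p + b^p)` and the subadditivity of `t ↦ t^{1/p}`.
-/

open MeasureTheory

namespace Real

lemma add_rpow_le_two_rpow_mul_rpow_add_rpow {a b p : ℝ} (ha : 0 ≤ a) (hb : 0 ≤ b)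
    (hp : 0 ≤ p) : (a + b) ^ p ≤ 2 ^ p * (a ^ p + b ^ p) := calc
  (a + b) ^ p ≤ (2 * max a b) ^ p := by gcongr; rw [two_mul]; gcongr <;> simp
  _ = 2 ^ p * max a b ^ p := mul_rpow zero_le_two (ha.trans (le_max_left a b))
  _ ≤ 2 ^ p * (a ^ p + b ^ p) := by
    gcongr
    rcases le_total a b with h | h
    · simpa [max_eq_right h] using rpow_nonneg ha p
    · simpa [max_eq_left h] using rpow_nonneg hb p

end Real

lemma sqrt_le_sqrt_min_add_of_mem_segment {F : Type*} [NormedAddCommGroup F] [NormedSpace ℝ F]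
    {V : F → ℝ} {L : ℝ} (hL : 0 ≤ L) (hV : ∀ x y, |√(V x) - √(V y)| ≤ L * ‖x - y‖)
    {x y ξ : F} (hξ : ξ ∈ segment ℝ x y) :
    √(V ξ) ≤ √(min (V x) (V y)) + L * ‖x - y‖ := by
  have hdist := dist_add_dist_of_mem_segment hξ
  have hx : √(V ξ) ≤ √(V x) + L * ‖x - y‖ := by
    have := (abs_sub_le_iff.1 (hV ξ x)).1
    have : ‖ξ - x‖ ≤ ‖x - y‖ := by
      rw [← dist_eq_norm, ← dist_eq_norm, dist_comm]; linarith [dist_nonneg (x := ξ) (y := y)]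
    nlinarith
  have hy : √(V ξ) ≤ √(V y) + L * ‖x - y‖ := by
    have := (abs_sub_le_iff.1 (hV ξ y)).1
    have : ‖ξ - y‖ ≤ ‖x - y‖ := by
      rw [← dist_eq_norm, ← dist_eq_norm]; linarith [dist_nonneg (x := x) (y := ξ)]
    nlinarith
  rcases min_cases (V x) (V y) with ⟨h, -⟩ | ⟨h, -⟩ <;> rw [h] <;> assumption

lemma rpow_le_of_mem_segment {F : Type*} [NormedAddCommGroup F] [NormedSpace ℝ F]
    {V : F → ℝ} {L r : ℝ} (hL : 0 ≤ L) (hr : 0 ≤ r) (hV₀ : ∀ x, 0 ≤ V x)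
    (hV : ∀ x y, |√(V x) - √(V y)| ≤ L * ‖x - y‖) {x y ξ : F} (hξ : ξ ∈ segment ℝ x y) :
    V ξ ^ r ≤ 2 ^ (2 * r) * (min (V x) (V y) ^ r + L ^ (2 * r) * ‖x - y‖ ^ (2 * r)) := by
  have sqrt_rpow : ∀ {t : ℝ}, 0 ≤ t → √t ^ (2 * r) = t ^ r := fun ht => by
    rw [Real.sqrt_eq_rpow, ← Real.rpow_mul ht]; ring_nf
  have hm : 0 ≤ min (V x) (V y) := le_min (hV₀ x) (hV₀ y)
  calc V ξ ^ r = √(V ξ) ^ (2 * r) := (sqrt_rpow (hV₀ ξ)).symm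
    _ ≤ (√(min (V x) (V y)) + L * ‖x - y‖) ^ (2 * r) := by
      gcongr; exact sqrt_le_sqrt_min_add_of_mem_segment hL hV hξ
    _ ≤ 2 ^ (2 * r) * (√(min (V x) (V y)) ^ (2 * r) + (L * ‖x - y‖) ^ (2 * r)) :=
      Real.add_rpow_le_two_rpow_mul_rpow_add_rpow (by positivity) (by positivity) (by positivity)
    _ = _ := by rw [sqrt_rpow hm, Real.mul_rpow hL (norm_nonneg _)]

lemma integral_rpow_rpow_inv_le_of_le_mul_add {Ω : Type*} [MeasurableSpace Ω] {μ : Measure Ω}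
    {S u v : Ω → ℝ} {a p : ℝ} (hp : 1 ≤ p) (ha : 0 ≤ a) (hS : ∀ ω, 0 ≤ S ω)
    (hu : ∀ ω, 0 ≤ u ω) (hv : ∀ ω, 0 ≤ v ω)
    (hu_int : Integrable (fun ω => u ω ^ p) μ) (hv_int : Integrable (fun ω => v ω ^ p) μ)
    (hSuv : ∀ ω, S ω ≤ a * (u ω + v ω)) :
    (∫ ω, S ω ^ p ∂μ) ^ (1 / p) ≤
      2 * a * ((∫ ω, u ω ^ p ∂μ) ^ (1 / p) + (∫ ω, v ω ^ p ∂μ) ^ (1 / p)) := by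
  have hp₀ : 0 ≤ p := zero_le_one.trans hp
  have hU : 0 ≤ ∫ ω, u ω ^ p ∂μ := integral_nonneg fun ω => Real.rpow_nonneg (hu ω) p
  have hW : 0 ≤ ∫ ω, v ω ^ p ∂μ := integral_nonneg fun ω => Real.rpow_nonneg (hv ω) p
  have hpointwise : ∀ ω, S ω ^ p ≤ (2 * a) ^ p * (u ω ^ p + v ω ^ p) := fun ω => calc
    S ω ^ p ≤ (a * (u ω + v ω)) ^ p := by gcongr; exacts [hS ω, hSuv ω]
    _ = a ^ p * (u ω + v ω) ^ p := Real.mul_rpow ha (add_nonneg (hu ω) (hv ω))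
    _ ≤ a ^ p * (2 ^ p * (u ω ^ p + v ω ^ p)) := by
      gcongr; exact Real.add_rpow_le_two_rpow_mul_rpow_add_rpow (hu ω) (hv ω) hp₀
    _ = (2 * a) ^ p * (u ω ^ p + v ω ^ p) := by rw [Real.mul_rpow zero_le_two ha]; ring
  -- `S` need not be measurable: `integral_mono_of_nonneg` only needs the upper bound integrable.
  have hintegral : ∫ ω, S ω ^ p ∂μ ≤
      (2 * a) ^ p * (∫ ω, u ω ^ p ∂μ + ∫ ω, v ω ^ p ∂μ) := by
    rw [← integral_add hu_int hv_int, ← integral_const_mul]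
    exact integral_mono_of_nonneg (.of_forall fun ω => Real.rpow_nonneg (hS ω) p)
      ((hu_int.add hv_int).const_mul _) (.of_forall hpointwise)
  calc (∫ ω, S ω ^ p ∂μ) ^ (1 / p)
      ≤ ((2 * a) ^ p * (∫ ω, u ω ^ p ∂μ + ∫ ω, v ω ^ p ∂μ)) ^ (1 / p) := by
        gcongr; exact integral_nonneg fun ω => Real.rpow_nonneg (hS ω) p
    _ = 2 * a * (∫ ω, u ω ^ p ∂μ + ∫ ω, v ω ^ p ∂μ) ^ (1 / p) := by
        rw [Real.mul_rpow (by positivity) (add_nonneg hU hW), ← Real.rpow_mul (by positivity),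
          mul_one_div_cancel (by positivity), Real.rpow_one]
    _ ≤ _ := by
        gcongr
        exact Real.rpow_add_le_add_rpow hU hW (by positivity) ((div_le_one (by positivity)).2 hp)

lemma integral_rpow_rpow_one_div_eq {Ω : Type*} [MeasurableSpace Ω] {μ : Measure Ω}
    {f : Ω → ℝ} (hf : ∀ ω, 0 ≤ f ω) {s p : ℝ} (hs : s ≠ 0) :
    (∫ ω, (f ω ^ s) ^ p ∂μ) ^ (1 / p) = ((∫ ω, f ω ^ (s * p) ∂μ) ^ (1 / (s * p))) ^ s := by
  have hI : 0 ≤ ∫ ω, f ω ^ (s * p) ∂μ := integral_nonneg fun ω => Real.rpow_nonneg (hf ω) _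
  simp_rw [← Real.rpow_mul (hf _), ← Real.rpow_mul hI]
  field_simp

theorem stmt_15_general {d : ℕ} {E : Type*} [NormedAddCommGroup E]
    {Ω : Type*} [MeasurableSpace Ω] (P : Measure Ω)
    (V : EuclideanSpace ℝ (Fin d) → ℝ) (Φ : EuclideanSpace ℝ (Fin d) → E)
    (Lv C r : ℝ) (hLv : 0 ≤ Lv) (hC : 0 < C) (hr : 0 < r)
    (hV : ∀ x, 0 < V x)
    (hVLip : ∀ x y, |Real.sqrt (V x) - Real.sqrt (V y)| ≤ Lv * ‖x - y‖)
    (hΦ : ∀ x, ‖Φ x‖ ≤ C * V x ^ r) :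
    ∃ C' : ℝ, 0 < C' ∧
      ∀ (Y Z : Ω → EuclideanSpace ℝ (Fin d)) (p : ℝ), 1 ≤ p →
        Integrable (fun ω => (min (V (Y ω)) (V (Z ω))) ^ (r * p)) P →
        Integrable (fun ω => ‖Y ω - Z ω‖ ^ (2 * r * p)) P →
        (∫ ω, (⨆ l : Set.Ioo (0 : ℝ) 1,
            ‖Φ ((l : ℝ) • Y ω + (1 - (l : ℝ)) • Z ω)‖) ^ p ∂P) ^ (1 / p) ≤
          C' * (((∫ ω, (min (V (Y ω)) (V (Z ω))) ^ (r * p) ∂P) ^ (1 / (r * p))) ^ r +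
            ((∫ ω, ‖Y ω - Z ω‖ ^ (2 * r * p) ∂P) ^ (1 / (2 * r * p))) ^ (2 * r)) := by
  have : Nonempty (Set.Ioo (0 : ℝ) 1) := ⟨⟨1 / 2, by norm_num⟩⟩
  set K := C * 2 ^ (2 * r) * (1 + Lv ^ (2 * r))
  refine ⟨2 * K, by positivity, fun Y Z p hp hm_int hD_int => ?_⟩
  have hm : ∀ ω, 0 ≤ min (V (Y ω)) (V (Z ω)) := fun ω => le_min (hV _).le (hV _).le
  have hsup : ∀ ω, (⨆ l : Set.Ioo (0 : ℝ) 1, ‖Φ ((l : ℝ) • Y ω + (1 - (l : ℝ)) • Z ω)‖) ≤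
      K * (min (V (Y ω)) (V (Z ω)) ^ r + ‖Y ω - Z ω‖ ^ (2 * r)) := fun ω =>
    ciSup_le fun ⟨l, hl₀, hl₁⟩ => calc
      _ ≤ C * V (l • Y ω + (1 - l) • Z ω) ^ r := hΦ _
      _ ≤ C * (2 ^ (2 * r) * (min (V (Y ω)) (V (Z ω)) ^ r +
            Lv ^ (2 * r) * ‖Y ω - Z ω‖ ^ (2 * r))) := by
        gcongr
        exact rpow_le_of_mem_segment hLv hr.le (fun x => (hV x).le) hVLip
          ⟨l, 1 - l, hl₀.le, by linarith, by ring, rfl⟩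
      _ ≤ _ := by
        have := Real.rpow_nonneg (hm ω) r
        have := Real.rpow_nonneg (norm_nonneg (Y ω - Z ω)) (2 * r)
        have := Real.rpow_nonneg hLv (2 * r)
        unfold K; rw [mul_assoc, mul_assoc]; gcongr C * (2 ^ (2 * r) * ?_); nlinarith
  calc _ ≤ 2 * K * ((∫ ω, (min (V (Y ω)) (V (Z ω)) ^ r) ^ p ∂P) ^ (1 / p) +
        (∫ ω, (‖Y ω - Z ω‖ ^ (2 * r)) ^ p ∂P) ^ (1 / p)) :=
      integral_rpow_rpow_inv_le_of_le_mul_add hp (by positivity)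
        (fun ω => Real.iSup_nonneg fun _ => norm_nonneg _)
        (fun ω => Real.rpow_nonneg (hm ω) r) (fun ω => by positivity)
        (hm_int.congr (.of_forall fun ω => Real.rpow_mul (hm ω) r p))
        (hD_int.congr (.of_forall fun ω => Real.rpow_mul (norm_nonneg _) (2 * r) p)) hsup
    _ = _ := by
      rw [integral_rpow_rpow_one_div_eq hm hr.ne',
        integral_rpow_rpow_one_div_eq (fun ω => norm_nonneg _) (by positivity)]

/-- Let `√V` be Lipschitz, `V > 0`, and `|Φ| ≤ C·V^r`. Then there is a constant
`C' = C'_{Φ,V,r}` such that for all random vectors `Y, Z` (with suitable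
integrability) and every `p ∈ [1,∞)`,
`‖sup_{ξ∈(Y,Z)}|Φ(ξ)|‖_p ≤ C'(‖V(Y)∧V(Z)‖_{rp}^r + ‖Y−Z‖_{2rp}^{2r})`,
the supremum being over the open segment `(Y,Z)`. -/
theorem stmt_15 {d : ℕ} {E : Type*} [NormedAddCommGroup E]
    {Ω : Type*} [MeasurableSpace Ω] (P : Measure Ω) [IsProbabilityMeasure P]
    (V : EuclideanSpace ℝ (Fin d) → ℝ) (Φ : EuclideanSpace ℝ (Fin d) → E)
    (Lv C r : ℝ) (hLv : 0 ≤ Lv) (hC : 0 < C) (hr : 0 < r)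
    (hV : ∀ x, 0 < V x)
    (hVLip : ∀ x y, |Real.sqrt (V x) - Real.sqrt (V y)| ≤ Lv * ‖x - y‖)
    (hΦ : ∀ x, ‖Φ x‖ ≤ C * V x ^ r) :
    ∃ C' : ℝ, 0 < C' ∧
      ∀ (Y Z : Ω → EuclideanSpace ℝ (Fin d)) (p : ℝ), 1 ≤ p →
        Integrable (fun ω => (min (V (Y ω)) (V (Z ω))) ^ (r * p)) P →
        Integrable (fun ω => ‖Y ω - Z ω‖ ^ (2 * r * p)) P →
        (∫ ω, (⨆ l : Set.Ioo (0 : ℝ) 1,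
            ‖Φ ((l : ℝ) • Y ω + (1 - (l : ℝ)) • Z ω)‖) ^ p ∂P) ^ (1 / p) ≤
          C' * (((∫ ω, (min (V (Y ω)) (V (Z ω))) ^ (r * p) ∂P) ^ (1 / (r * p))) ^ r +
            ((∫ ω, ‖Y ω - Z ω‖ ^ (2 * r * p) ∂P) ^ (1 / (2 * r * p))) ^ (2 * r)) :=
  stmt_15_general P V Φ Lv C r hLv hC hr hV hVLip hΦ
end

section
/- Let φ, ψ : [0,T] → ℝ_+ be non-decreasing with φ(t) ≤ ψ(t) + K₁∫_0^t φ(s)ds + K₂ (∫_0^t φ(s)^2 ds)^{1/2} for all t ∈ [0,T], where K₁, K₂ ≥ 0 and φ is bounded. Then φ(t) ≤ 2 e^{(2K₁ + K₂²)t} ψ(t) for all t ∈ [0,T]. -/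
/-!
Since `φ` is non-decreasing and non-negative, `∫₀ᵗ φ² ≤ φ(t) ∫₀ᵗ φ`, so by AM-GM
`K₂ (∫₀ᵗ φ²)^{1/2} ≤ φ(t)/2 + (K₂²/2) ∫₀ᵗ φ`. Absorbing `φ(t)/2` into the left-hand side gives
`φ(u) ≤ 2ψ(t) + (2K₁ + K₂²) ∫₀ᵘ φ` for `u ≤ t`, and the linear Gronwall inequality with constant
forcing term finishes. The latter is proved by Picard iteration: starting from `φ ≤ M`, the `n`-th
iterate gives `φ(u) ≤ A e^{Cu} + M (Cu)ⁿ / n!`, and the remainder tends to `0`.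
-/

open Set Filter Topology MeasureTheory Real

lemma integral_sq_le_mul_integral_of_monotoneOn {f : ℝ → ℝ} {a b : ℝ} (hab : a ≤ b)
    (hmono : MonotoneOn f (Icc a b)) (hnonneg : ∀ s ∈ Icc a b, 0 ≤ f s) :
    ∫ s in a..b, f s ^ 2 ≤ f b * ∫ s in a..b, f s := by
  have hb : b ∈ Icc a b := right_mem_Icc.2 hab
  have hsq : MonotoneOn (fun s => f s ^ 2) (Icc a b) := fun x hx y hy hxy =>
    pow_le_pow_left₀ (hnonneg x hx) (hmono hx hy hxy) 2
  rw [← intervalIntegral.integral_const_mul]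
  refine intervalIntegral.integral_mono_on hab (uIcc_of_le hab ▸ hsq).intervalIntegrable
    ((uIcc_of_le hab ▸ hmono).intervalIntegrable.const_mul _) fun s hs => ?_
  rw [sq]
  exact mul_le_mul_of_nonneg_right (hmono hs hb hs.2) (hnonneg s hs)

lemma mul_sqrt_mul_le {a b : ℝ} (K : ℝ) (ha : 0 ≤ a) (hb : 0 ≤ b) :
    K * √(a * b) ≤ a / 2 + K ^ 2 * b / 2 := by
  have := two_mul_le_add_sq (√a) (K * √b)
  rw [sqrt_mul ha, mul_pow, sq_sqrt ha, sq_sqrt hb] at *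
  linarith

lemma hasDerivAt_mul_exp_add_pow_div_factorial (A C M s : ℝ) (n : ℕ) :
    HasDerivAt (fun s => A * exp (C * s) + M * (C * s) ^ (n + 1) / (n + 1).factorial)
      (C * (A * exp (C * s) + M * (C * s) ^ n / n.factorial)) s := by
  have hlin : HasDerivAt (fun s => C * s) C s := by simpa using (hasDerivAt_id s).const_mul C
  refine ((hlin.exp.const_mul A).add
    ((hlin.pow (n + 1)).const_mul M |>.div_const ((n + 1).factorial : ℝ))).congr_deriv ?_
  push_cast [Nat.factorial_succ, Nat.add_sub_cancel]
  field_simp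

lemma add_mul_integral_mul_exp_add_pow_div_factorial (A C M u : ℝ) (n : ℕ) :
    A + C * ∫ s in 0..u, (A * exp (C * s) + M * (C * s) ^ n / n.factorial) =
      A * exp (C * u) + M * (C * u) ^ (n + 1) / (n + 1).factorial := by
  rw [← intervalIntegral.integral_const_mul, intervalIntegral.integral_eq_sub_of_hasDerivAt
    (fun s _ => hasDerivAt_mul_exp_add_pow_div_factorial A C M s n)]
  · simp
  · exact Continuous.intervalIntegrable (by fun_prop) _ _

section Gronwall

variable {f : ℝ → ℝ} {A C M t : ℝ}

lemma le_mul_exp_add_pow_div_factorial_of_le_add_mul_integral (hA : 0 ≤ A) (hC : 0 ≤ C)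
    (hint : IntervalIntegrable f volume 0 t) (hM : ∀ u ∈ Icc 0 t, f u ≤ M)
    (h : ∀ u ∈ Icc 0 t, f u ≤ A + C * ∫ s in 0..u, f s) (n : ℕ) :
    ∀ u ∈ Icc 0 t, f u ≤ A * exp (C * u) + M * (C * u) ^ n / n.factorial := by
  induction n with
  | zero =>
    intro u hu
    simpa using (hM u hu).trans (le_add_of_nonneg_left (by positivity : 0 ≤ A * exp (C * u)))
  | succ n ih =>
    intro u hu
    rw [← add_mul_integral_mul_exp_add_pow_div_factorial]
    refine (h u hu).trans ((add_le_add_iff_left A).2 (mul_le_mul_of_nonneg_left ?_ hC))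
    exact intervalIntegral.integral_mono_on hu.1
      (hint.mono_set (uIcc_subset_uIcc_left (Icc_subset_uIcc hu)))
      (Continuous.intervalIntegrable (by fun_prop) _ _) fun s hs => ih s ⟨hs.1, hs.2.trans hu.2⟩

theorem le_mul_exp_of_le_add_mul_integral (hA : 0 ≤ A) (hC : 0 ≤ C)
    (hint : IntervalIntegrable f volume 0 t) (hM : ∀ u ∈ Icc 0 t, f u ≤ M)
    (h : ∀ u ∈ Icc 0 t, f u ≤ A + C * ∫ s in 0..u, f s) :
    ∀ u ∈ Icc 0 t, f u ≤ A * exp (C * u) := by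
  intro u hu
  have hlim : Tendsto (fun n : ℕ => A * exp (C * u) + M * (C * u) ^ n / n.factorial) atTop
      (𝓝 (A * exp (C * u))) := by
    simpa [mul_div_assoc] using
      ((FloorSemiring.tendsto_pow_div_factorial_atTop (C * u)).const_mul M).const_add _
  exact ge_of_tendsto' hlim fun n =>
    le_mul_exp_add_pow_div_factorial_of_le_add_mul_integral hA hC hint hM h n u hu

end Gronwall

lemma le_two_mul_add_integral_of_le_add_integral_add_sqrt {f : ℝ → ℝ} {c K₁ K₂ t : ℝ}
    (ht : 0 ≤ t) (hK₂ : 0 ≤ K₂) (hmono : MonotoneOn f (Icc 0 t))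
    (hnonneg : ∀ s ∈ Icc 0 t, 0 ≤ f s)
    (h : f t ≤ c + K₁ * (∫ s in 0..t, f s) + K₂ * √(∫ s in 0..t, f s ^ 2)) :
    f t ≤ 2 * c + (2 * K₁ + K₂ ^ 2) * ∫ s in 0..t, f s := by
  have hI : 0 ≤ ∫ s in 0..t, f s := intervalIntegral.integral_nonneg ht hnonneg
  have hsqrt : K₂ * √(∫ s in 0..t, f s ^ 2) ≤ f t / 2 + K₂ ^ 2 * (∫ s in 0..t, f s) / 2 :=
    (mul_le_mul_of_nonneg_left
      (sqrt_le_sqrt (integral_sq_le_mul_integral_of_monotoneOn ht hmono hnonneg)) hK₂).trans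
      (mul_sqrt_mul_le K₂ (hnonneg t ⟨ht, le_rfl⟩) hI)
  linarith

theorem stmt_18_general (T K₁ K₂ : ℝ) (hK₁ : 0 ≤ K₁) (hK₂ : 0 ≤ K₂)
    (φ ψ : ℝ → ℝ)
    (hφ0 : ∀ t ∈ Set.Icc 0 T, 0 ≤ φ t) (hψ0 : ∀ t ∈ Set.Icc 0 T, 0 ≤ ψ t)
    (hφmono : MonotoneOn φ (Set.Icc 0 T)) (hψmono : MonotoneOn ψ (Set.Icc 0 T))
    (hineq : ∀ t ∈ Set.Icc 0 T,
      φ t ≤ ψ t + K₁ * (∫ s in (0 : ℝ)..t, φ s) +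
        K₂ * Real.sqrt (∫ s in (0 : ℝ)..t, (φ s) ^ 2)) :
    ∀ t ∈ Set.Icc 0 T, φ t ≤ 2 * Real.exp ((2 * K₁ + K₂ ^ 2) * t) * ψ t := by
  intro t ht
  have hsub : ∀ u ∈ Icc 0 t, Icc 0 u ⊆ Icc 0 T := fun u hu =>
    Icc_subset_Icc_right (hu.2.trans ht.2)
  have htt : t ∈ Icc 0 t := ⟨ht.1, le_rfl⟩
  -- Freezing `ψ` at `t` turns the forcing term into a constant on `[0, t]`.
  have hreduce : ∀ u ∈ Icc 0 t,
      φ u ≤ 2 * ψ t + (2 * K₁ + K₂ ^ 2) * ∫ s in 0..u, φ s := fun u hu => by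
    have hu' : u ∈ Icc 0 T := hsub u hu ⟨hu.1, le_rfl⟩
    have := le_two_mul_add_integral_of_le_add_integral_add_sqrt hu.1 hK₂
      (hφmono.mono (hsub u hu)) (fun s hs => hφ0 s (hsub u hu hs)) (hineq u hu')
    linarith [hψmono hu' ht hu.2]
  have hgronwall := le_mul_exp_of_le_add_mul_integral (mul_nonneg zero_le_two (hψ0 t ht))
    (by positivity) (uIcc_of_le ht.1 ▸ hφmono.mono (hsub t htt)).intervalIntegrable
    (fun u hu => hφmono (hsub t htt hu) ht hu.2) hreduce t htt
  linarith

/-- Gronwall-type lemma: if `φ, ψ : [0,T] → ℝ₊` are non-decreasing, `φ` bounded, and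
`φ(t) ≤ ψ(t) + K₁∫_0^t φ + K₂(∫_0^t φ²)^{1/2}` on `[0,T]` with `K₁, K₂ ≥ 0`, then
`φ(t) ≤ 2 e^{(2K₁ + K₂²)t} ψ(t)` on `[0,T]`. -/
theorem stmt_18 (T K₁ K₂ : ℝ) (hT : 0 ≤ T) (hK₁ : 0 ≤ K₁) (hK₂ : 0 ≤ K₂)
    (φ ψ : ℝ → ℝ)
    (hφ0 : ∀ t ∈ Set.Icc 0 T, 0 ≤ φ t) (hψ0 : ∀ t ∈ Set.Icc 0 T, 0 ≤ ψ t)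
    (hφmono : MonotoneOn φ (Set.Icc 0 T)) (hψmono : MonotoneOn ψ (Set.Icc 0 T))
    (hφbdd : BddAbove (φ '' Set.Icc 0 T))
    (hineq : ∀ t ∈ Set.Icc 0 T,
      φ t ≤ ψ t + K₁ * (∫ s in (0 : ℝ)..t, φ s) +
        K₂ * Real.sqrt (∫ s in (0 : ℝ)..t, (φ s) ^ 2)) :
    ∀ t ∈ Set.Icc 0 T, φ t ≤ 2 * Real.exp ((2 * K₁ + K₂ ^ 2) * t) * ψ t :=
  stmt_18_general T K₁ K₂ hK₁ hK₂ φ ψ hφ0 hψ0 hφmono hψmono hineq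
end
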